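/- If the loss function takes values in [0, 1] and the shift is ε-approximate label preserving with respect to T, then the estimated accuracy obtained via label transport differs from the true target accuracy by at most 2ε; in particular, if the true target loss exceeds the source loss by more than 4ε, the transport-estimated loss also exceeds the source loss (i.e., a genuine degradation of magnitude greater than 4ε is always detected up to 2ε error). -/

import Mathlib

/-!
Transport the target loss back to the source: since `T` pushes `P_s(X)` to `P_t(X)`, the true
target loss is the integral over `x ~ P_s(X)` of the conditional loss of `f (T x)` under
`P_t(Y | T x)`, while the estimate integrates the same function against `P_s(Y | x)`.
For a `[0,1]`-valued integrand the layer-cake formula writes each conditional loss as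
`∫₀¹ P(L > t) dt`, so two laws within `ε` on every event give conditional losses within `ε`. Hence
`|L_t - L̂_t| ≤ ε`, and a gap `L_t - L_s > 4ε` leaves `L̂_t - L_s > 3ε`.
-/

open MeasureTheory ProbabilityTheory Set

section UnitInterval

variable {α : Type*} [MeasurableSpace α] {g : α → ℝ}

lemma integrable_of_mem_Icc (μ : Measure α) [IsFiniteMeasure μ] (hg : Measurable g)
    (hg01 : ∀ a, g a ∈ Icc (0 : ℝ) 1) : Integrable g μ :=
  Integrable.of_bound hg.aestronglyMeasurable 1 <| ae_of_all _ fun a => by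
    rw [Real.norm_eq_abs, abs_le]
    exact ⟨by linarith [(hg01 a).1], (hg01 a).2⟩

lemma integral_mem_Icc (μ : Measure α) [IsProbabilityMeasure μ]
    (hg01 : ∀ a, g a ∈ Icc (0 : ℝ) 1) : ∫ a, g a ∂μ ∈ Icc (0 : ℝ) 1 := by
  refine ⟨integral_nonneg fun a => (hg01 a).1, ?_⟩
  have hnorm := norm_integral_le_of_norm_le_const (μ := μ) (C := 1) <| ae_of_all _ fun a => by
    rw [Real.norm_eq_abs, abs_of_nonneg (hg01 a).1]
    exact (hg01 a).2
  rw [probReal_univ, mul_one] at hnorm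
  exact (le_abs_self _).trans hnorm

lemma integral_eq_intervalIntegral_measureReal_lt (μ : Measure α) [IsFiniteMeasure μ]
    (hg : Measurable g) (hg01 : ∀ a, g a ∈ Icc (0 : ℝ) 1) :
    ∫ a, g a ∂μ = ∫ t in (0 : ℝ)..1, μ.real {a | t < g a} := by
  have htail : ∀ t ∈ Ioi (0 : ℝ) \ Ioc 0 1, μ.real {a | t < g a} = 0 := by
    rintro t ⟨ht0, ht⟩
    have hempty : {a | t < g a} = ∅ :=
      eq_empty_of_forall_notMem fun a ha => ht ⟨ht0, (ha.trans_le (hg01 a).2).le⟩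
    simp [hempty]
  rw [(integrable_of_mem_Icc μ hg hg01).integral_eq_integral_meas_lt
      (ae_of_all _ fun a => (hg01 a).1),
    setIntegral_eq_of_subset_of_forall_sdiff_eq_zero measurableSet_Ioi Ioc_subset_Ioi_self htail,
    intervalIntegral.integral_of_le zero_le_one]

lemma abs_integral_sub_integral_le_of_abs_measureReal_sub_le (μ ν : Measure α)
    [IsFiniteMeasure μ] [IsFiniteMeasure ν] (hg : Measurable g)
    (hg01 : ∀ a, g a ∈ Icc (0 : ℝ) 1) {ε : ℝ}
    (hμν : ∀ A, MeasurableSet A → |μ.real A - ν.real A| ≤ ε) :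
    |∫ a, g a ∂μ - ∫ a, g a ∂ν| ≤ ε := by
  have hanti : ∀ ρ : Measure α, [IsFiniteMeasure ρ] → Antitone fun t => ρ.real {a | t < g a} :=
    fun ρ _ s t hst => measureReal_mono fun a ha => hst.trans_lt ha
  rw [integral_eq_intervalIntegral_measureReal_lt μ hg hg01,
    integral_eq_intervalIntegral_measureReal_lt ν hg hg01,
    ← intervalIntegral.integral_sub (hanti μ).intervalIntegrable (hanti ν).intervalIntegrable]
  simpa using intervalIntegral.norm_integral_le_of_norm_le_const (a := 0) (b := 1)
    (f := fun t => μ.real {a | t < g a} - ν.real {a | t < g a})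
    fun t _ => hμν _ (hg measurableSet_Ioi)

end UnitInterval

section CompProd

variable {X X' Y : Type*} [MeasurableSpace X] [MeasurableSpace X'] [MeasurableSpace Y]

lemma map_compProd_eq_map_compProd_comap (μ : Measure X) [SFinite μ] (κ : Kernel X' Y)
    [IsSFiniteKernel κ] {T : X → X'} (hT : Measurable T) :
    μ.map T ⊗ₘ κ = (μ ⊗ₘ κ.comap T hT).map (Prod.map T id) := by
  ext s hs
  rw [Measure.map_apply (hT.prodMap measurable_id) hs, Measure.compProd_apply hs,
    Measure.compProd_apply (hs.preimage (hT.prodMap measurable_id)),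
    lintegral_map (Kernel.measurable_kernel_prodMk_left hs) hT]
  rfl

lemma abs_integral_compProd_sub_le (μ : Measure X) [IsProbabilityMeasure μ] (κ η : Kernel X Y)
    [IsMarkovKernel κ] [IsMarkovKernel η] {g : X × Y → ℝ} (hg : Measurable g)
    (hg01 : ∀ p, g p ∈ Icc (0 : ℝ) 1) {ε : ℝ}
    (hκη : ∀ x A, MeasurableSet A → |(κ x).real A - (η x).real A| ≤ ε) :
    |∫ p, g p ∂(μ ⊗ₘ κ) - ∫ p, g p ∂(μ ⊗ₘ η)| ≤ ε := by
  have hcond : ∀ ρ : Kernel X Y, [IsMarkovKernel ρ] →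
      ∫ p, g p ∂(μ ⊗ₘ ρ) = ∫ x, ∫ y, g (x, y) ∂ρ x ∂μ ∧
        Integrable (fun x => ∫ y, g (x, y) ∂ρ x) μ := fun ρ _ =>
    ⟨Measure.integral_compProd (integrable_of_mem_Icc _ hg hg01),
      integrable_of_mem_Icc μ hg.stronglyMeasurable.integral_kernel_prod_right'.measurable
        fun x => integral_mem_Icc (ρ x) fun y => hg01 (x, y)⟩
  obtain ⟨hκ, hκi⟩ := hcond κ
  obtain ⟨hη, hηi⟩ := hcond η
  rw [hκ, hη, ← integral_sub hκi hηi]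
  simpa using norm_integral_le_of_norm_le_const (μ := μ)
    (f := fun x => ∫ y, g (x, y) ∂κ x - ∫ y, g (x, y) ∂η x) <| ae_of_all _ fun x =>
    abs_integral_sub_integral_le_of_abs_measureReal_sub_le (κ x) (η x)
      (hg.comp measurable_prodMk_left) (fun y => hg01 (x, y)) (hκη x)

end CompProd

theorem degradation_detection_general {X Y Z : Type*}
    [MeasurableSpace X] [MeasurableSpace Y] [MeasurableSpace Z]
    (μs : Measure X) (μt : Measure X)
    [IsProbabilityMeasure μs]
    (κs : Kernel X Y) (κt : Kernel X Y) [IsMarkovKernel κs] [IsMarkovKernel κt]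
    (T : X → X) (hT : Measurable T) (hpush : μs.map T = μt)
    (f : X → Z) (hf : Measurable f)
    (L : Z → Y → ℝ) (hL : Measurable (Function.uncurry L))
    (hLbound : ∀ z y, L z y ∈ Set.Icc (0 : ℝ) 1)
    (ε : ℝ) (hε : 0 ≤ ε)
    (hlabel : ∀ x : X, ∀ A : Set Y, MeasurableSet A →
      |(κt (T x) A).toReal - (κs x A).toReal| ≤ ε) :
    |(∫ p, L (f p.1) p.2 ∂(μt.compProd κt)) -
      (∫ p, L (f (T p.1)) p.2 ∂(μs.compProd κs))| ≤ 2 * ε ∧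
    ((∫ p, L (f p.1) p.2 ∂(μt.compProd κt)) -
        (∫ p, L (f p.1) p.2 ∂(μs.compProd κs)) > 4 * ε →
      (∫ p, L (f (T p.1)) p.2 ∂(μs.compProd κs)) -
        (∫ p, L (f p.1) p.2 ∂(μs.compProd κs)) > 2 * ε) := by
  have hloss : Measurable fun p : X × Y => L (f p.1) p.2 :=
    hL.comp ((hf.comp measurable_fst).prodMk measurable_snd)
  have htarget : ∫ p, L (f p.1) p.2 ∂(μt.compProd κt)
      = ∫ p, L (f (T p.1)) p.2 ∂(μs ⊗ₘ κt.comap T hT) := by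
    rw [← hpush, map_compProd_eq_map_compProd_comap μs κt hT,
      integral_map (hT.prodMap measurable_id).aemeasurable hloss.aestronglyMeasurable]
    rfl
  have hclose := htarget ▸ abs_integral_compProd_sub_le μs (κt.comap T hT) κs
    (g := fun p => L (f (T p.1)) p.2) (hloss.comp (hT.prodMap measurable_id)) (fun p => hLbound _ _) hlabel
  exact ⟨by linarith, fun hgap => by linarith [abs_le.mp hclose]⟩

/-- With a `[0,1]`-valued loss and an ε-approximate label-preserving shift, the
transport-estimated loss differs from the true target loss by at most `2ε`; in particular,
a genuine degradation of magnitude greater than `4ε` is detected up to `2ε` error. -/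
theorem degradation_detection {X Y Z : Type*}
    [MeasurableSpace X] [MeasurableSpace Y] [MeasurableSpace Z]
    (μs : Measure X) (μt : Measure X)
    [IsProbabilityMeasure μs] [IsProbabilityMeasure μt]
    (κs : Kernel X Y) (κt : Kernel X Y) [IsMarkovKernel κs] [IsMarkovKernel κt]
    (T : X → X) (hT : Measurable T) (hpush : μs.map T = μt)
    (f : X → Z) (hf : Measurable f)
    (L : Z → Y → ℝ) (hL : Measurable (Function.uncurry L))
    (hLbound : ∀ z y, L z y ∈ Set.Icc (0 : ℝ) 1)
    (ε : ℝ) (hε : 0 ≤ ε)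
    (hlabel : ∀ x : X, ∀ A : Set Y, MeasurableSet A →
      |(κt (T x) A).toReal - (κs x A).toReal| ≤ ε) :
    |(∫ p, L (f p.1) p.2 ∂(μt.compProd κt)) -
      (∫ p, L (f (T p.1)) p.2 ∂(μs.compProd κs))| ≤ 2 * ε ∧
    ((∫ p, L (f p.1) p.2 ∂(μt.compProd κt)) -
        (∫ p, L (f p.1) p.2 ∂(μs.compProd κs)) > 4 * ε →
      (∫ p, L (f (T p.1)) p.2 ∂(μs.compProd κs)) -
        (∫ p, L (f p.1) p.2 ∂(μs.compProd κs)) > 2 * ε) :=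
  degradation_detection_general μs μt κs κt T hT hpush f hf L hL hLbound ε hε hlabel
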